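/- arXiv:math/9806045 — 9 statements merged into one kernel-verified Lean document; each statement's English description precedes it below -/
import Mathlib

section
/- If φ : X → X is a boundary function, then the set σ[φ] = {(x,y) ∈ P : some open neighborhood N of (x,y) in G satisfies N ⊆ η(φ)}, where η(φ) = {(x,y) ∈ P : x ⪯ φ(y)}, is an ideal set: it is an open subset of P, and (w,x) ∈ P, (x,y) ∈ σ[φ] and (y,z) ∈ P imply (w,z) ∈ σ[φ]. -/
open Set Topology

/-- A point has a gap below if it has an immediate predecessor. -/
def HasGapBelow {X : Type*} [Preorder X] (x : X) : Prop := ∃ p, p ⋖ x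

/-- A point has a gap above if it has an immediate successor. -/
def HasGapAbove {X : Type*} [Preorder X] (x : X) : Prop := ∃ q, x ⋖ q

open Classical in
/-- The immediate predecessor of `x` when it exists; `x` itself otherwise. -/
noncomputable def predOf {X : Type*} [Preorder X] (x : X) : X :=
  if h : ∃ p, p ⋖ x then h.choose else x

open Classical in
/-- The immediate successor of `x` when it exists; `x` itself otherwise. -/
noncomputable def succOf {X : Type*} [Preorder X] (x : X) : X :=
  if h : ∃ q, x ⋖ q then h.choose else x

/-- The setting: `X` a linearly ordered topological space, `G ⊆ X × X` an
equivalence relation carrying its own topology `tG` (finer than the subspace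
topology, i.e. the inclusion is continuous) for which both coordinate
projections are local homeomorphisms, each orbit countable and dense, and
`P ⊆ G` an open transitive subset which on `G` coincides with the order. -/
structure BFSetting (X : Type*) [LinearOrder X] [TopologicalSpace X] where
  G : Set (X × X)
  tG : TopologicalSpace G
  G_refl : ∀ x : X, (x, x) ∈ G
  G_symm : ∀ {x y : X}, (x, y) ∈ G → (y, x) ∈ G
  G_trans : ∀ {x y z : X}, (x, y) ∈ G → (y, z) ∈ G → (x, z) ∈ G
  incl_continuous : @Continuous G (X × X) tG _ Subtype.val
  pi1_localHomeomorph : @IsLocalHomeomorph G X tG _ (fun g => (g : X × X).1)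
  pi2_localHomeomorph : @IsLocalHomeomorph G X tG _ (fun g => (g : X × X).2)
  orbit_countable : ∀ y : X, {x : X | (x, y) ∈ G}.Countable
  orbit_dense : ∀ y : X, Dense {x : X | (x, y) ∈ G}
  P : Set (X × X)
  P_subset : P ⊆ G
  P_open : @IsOpen G tG (Subtype.val ⁻¹' P)
  P_trans : ∀ {x y z : X}, (x, y) ∈ P → (y, z) ∈ P → (x, z) ∈ P
  P_iff_le : ∀ {x y : X}, (x, y) ∈ G → ((x, y) ∈ P ↔ x ≤ y)

namespace BFSetting

variable {X : Type*} [LinearOrder X] [TopologicalSpace X]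

/-- `N` is an open subset of `G` (in the topology of `G`). -/
def OpenInG (S : BFSetting X) (N : Set (X × X)) : Prop :=
  N ⊆ S.G ∧ @IsOpen S.G S.tG (Subtype.val ⁻¹' N)

/-- A `G`-set: an open subset of `G` on which both projections are injective. -/
def GSet (S : BFSetting X) (N : Set (X × X)) : Prop :=
  S.OpenInG N ∧ Set.InjOn Prod.fst N ∧ Set.InjOn Prod.snd N

/-- An ideal set: an open subset of `P` absorbing multiplication by `P` on both sides. -/
def IdealSet (S : BFSetting X) (σ : Set (X × X)) : Prop :=
  σ ⊆ S.P ∧ @IsOpen S.G S.tG (Subtype.val ⁻¹' σ) ∧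
    ∀ w x y z : X, (w, x) ∈ S.P → (x, y) ∈ σ → (y, z) ∈ S.P → (w, z) ∈ σ

/-- `φ` is the boundary function of `σ`: `φ y` is the least upper bound of
`{x ∈ orb_y : (x, y) ∈ σ}` (for the empty set this forces `φ y` to be the
least element of `X`). -/
def IsBdryFnOf (S : BFSetting X) (σ : Set (X × X)) (φ : X → X) : Prop :=
  ∀ y : X, IsLUB {x : X | (x, y) ∈ S.G ∧ (x, y) ∈ σ} (φ y)

/-- The abstract axioms for a boundary function. -/
def BoundaryFunction (S : BFSetting X) (φ : X → X) : Prop :=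
  (∀ y, φ y ≤ y) ∧
  (∀ y, HasGapBelow (φ y) →
    (φ y, y) ∈ S.P ∧ HasGapBelow y ∧ (∀ z, y < z → φ y < φ z) ∧
    ∃ N : Set (X × X), S.GSet N ∧ (φ y, y) ∈ N ∧ ∀ s t : X, (s, t) ∈ N → s ≤ φ t) ∧
  (∀ y z, y < z → φ y ≤ φ z) ∧
  (∀ y, ¬ HasGapBelow y → IsLUB (φ '' {t | t < y}) (φ y))

/-- `σ(φ)`. -/
def sigmaOpen (S : BFSetting X) (φ : X → X) : Set (X × X) :=
  {p ∈ S.P | p.1 < φ p.2}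

/-- `η(φ)`. -/
def eta (S : BFSetting X) (φ : X → X) : Set (X × X) :=
  {p ∈ S.P | p.1 ≤ φ p.2}

/-- `σ[φ]`. -/
def sigmaClosed (S : BFSetting X) (φ : X → X) : Set (X × X) :=
  {p ∈ S.P | ∃ N : Set (X × X), S.OpenInG N ∧ p ∈ N ∧ N ⊆ S.eta φ}

/-- `L_φ`: the part of the graph of `φ` (at points with a gap below) lying in `σ[φ]`. -/
def Lset (S : BFSetting X) (φ : X → X) : Set (X × X) :=
  {p : X × X | ∃ y : X, p = (φ y, y) ∧ HasGapBelow (φ y)} ∩ S.sigmaClosed φ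

/-- A point of modification for `φ`. -/
def ModPoint (S : BFSetting X) (φ : X → X) (y : X) : Prop :=
  HasGapBelow y ∧ HasGapAbove (φ y) ∧
  ∃ N : Set (X × X), S.GSet N ∧ N ⊆ S.P ∧ (succOf (φ y), y) ∈ N ∧
    ∀ s t : X, (s, t) ∈ N →
      (¬ HasGapAbove (φ t) → s ≤ φ t) ∧ (HasGapAbove (φ t) → s ≤ succOf (φ t))

open Classical in
/-- `φ⁺`. -/
noncomputable def bPlus (S : BFSetting X) (φ : X → X) : X → X :=
  fun y => if S.ModPoint φ y then succOf (φ y) else φ y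

/-- A meet irreducible boundary function. -/
def MeetIrred (S : BFSetting X) (φ : X → X) : Prop :=
  S.BoundaryFunction φ ∧
  ∀ ψ₁ ψ₂ : X → X, S.BoundaryFunction ψ₁ → S.BoundaryFunction ψ₂ →
    (∀ y, φ y = min (ψ₁ y) (ψ₂ y)) → φ = ψ₁ ∨ φ = ψ₂

/-- A join irreducible boundary function. -/
def JoinIrred (S : BFSetting X) (φ : X → X) : Prop :=
  S.BoundaryFunction φ ∧
  ∀ ψ₁ ψ₂ : X → X, S.BoundaryFunction ψ₁ → S.BoundaryFunction ψ₂ →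
    (∀ y, φ y = max (ψ₁ y) (ψ₂ y)) → φ = ψ₁ ∨ φ = ψ₂

/-- A join irreducible ideal set. -/
def JoinIrredSet (S : BFSetting X) (σ : Set (X × X)) : Prop :=
  S.IdealSet σ ∧
  ∀ σ₁ σ₂ : Set (X × X), S.IdealSet σ₁ → S.IdealSet σ₂ →
    σ = σ₁ ∪ σ₂ → σ = σ₁ ∨ σ = σ₂

end BFSetting

/-- `φ⁻`. -/
noncomputable def bMinus {X : Type*} [Preorder X] (φ : X → X) : X → X :=
  fun y => predOf (φ y)

variable {X : Type*} [LinearOrder X] [TopologicalSpace X] [OrderTopology X]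
  [CompactSpace X] [T2Space X] [Nonempty X]

open BFSetting

namespace BFSetting

set_option linter.unusedSectionVars false in
/-- Right absorption. -/
lemma sigma_absorb_right (S : BFSetting X) (φ : X → X)
    (hmono : ∀ a b : X, a ≤ b → φ a ≤ φ b) {x y z : X}
    (hxy : (x, y) ∈ S.sigmaClosed φ) (hyz : (y, z) ∈ S.P) :
    (x, z) ∈ S.sigmaClosed φ := by
  letI := S.tG
  obtain ⟨hxyP, N, hNopen, hxyN, hNeta⟩ := hxy
  rcases eq_or_lt_of_le ((S.P_iff_le (S.P_subset hyz)).1 hyz) with rfl | hlt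
  · exact ⟨hxyP, N, hNopen, hxyN, hNeta⟩
  have hxyG : (x, y) ∈ S.G := S.P_subset hxyP
  have hxzG : (x, z) ∈ S.G := S.G_trans hxyG (S.P_subset hyz)
  have hxzP : (x, z) ∈ S.P :=
    (S.P_iff_le hxzG).2 (le_trans ((S.P_iff_le hxyG).1 hxyP) (le_of_lt hlt))
  set g₁ : S.G := ⟨(x, y), hxyG⟩ with hg₁
  set g₂ : S.G := ⟨(x, z), hxzG⟩ with hg₂
  obtain ⟨e₁, hg₁src, he₁⟩ := S.pi1_localHomeomorph g₁
  obtain ⟨e₂, hg₂src, he₂⟩ := S.pi1_localHomeomorph g₂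
  have hval2 : Continuous fun g : S.G => (g : X × X).2 :=
    continuous_snd.comp S.incl_continuous
  -- the basic open set where the composed section is defined and lands in `N`
  have hinner : IsOpen (e₁.target ∩ ⇑e₁.symm ⁻¹' (Subtype.val ⁻¹' N)) :=
    e₁.continuousOn_symm.isOpen_inter_preimage e₁.open_target hNopen.2
  set s₀ : Set S.G :=
    e₂.source ∩ ⇑e₂ ⁻¹' (e₁.target ∩ ⇑e₁.symm ⁻¹' (Subtype.val ⁻¹' N)) with hs₀def
  have hs₀ : IsOpen s₀ := e₂.continuousOn.isOpen_inter_preimage e₂.open_source hinner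
  set F : S.G → X × X :=
    fun g => (((e₁.symm (e₂ g) : S.G) : X × X).2, (g : X × X).2) with hFdef
  have hF : ContinuousOn F s₀ := by
    refine ContinuousOn.prodMk ?_ (hval2.continuousOn)
    refine hval2.comp_continuousOn ?_
    refine e₁.continuousOn_symm.comp (e₂.continuousOn.mono inter_subset_left) ?_
    exact fun g hg => hg.2.1
  set C : Set S.G :=
    (s₀ ∩ F ⁻¹' {p : X × X | p.1 < p.2}) ∩ (Subtype.val ⁻¹' S.P) with hCdef
  have hC : IsOpen C :=
    (hF.isOpen_inter_preimage hs₀ (isOpen_lt continuous_fst continuous_snd)).inter S.P_open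
  have hxe₁ : x ∈ e₁.target := by
    have : e₁ g₁ = x := by rw [← he₁]
    exact this ▸ e₁.map_source hg₁src
  have hsymm : e₁.symm x = g₁ := by
    have h1 : e₁ g₁ = x := by rw [← he₁]
    rw [← h1, e₁.left_inv hg₁src]
  have he₂g₂ : e₂ g₂ = x := by rw [← he₂]
  refine ⟨hxzP, Subtype.val '' C, ⟨?_, ?_⟩, ?_, ?_⟩
  · rintro p ⟨g, _, rfl⟩; exact g.2
  · rw [Set.preimage_image_eq C Subtype.val_injective]; exact hC
  · refine ⟨g₂, ⟨⟨⟨hg₂src, ?_⟩, ?_⟩, hxzP⟩, rfl⟩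
    · simp only [Set.mem_preimage, he₂g₂]
      exact ⟨hxe₁, by simp only [Set.mem_preimage, hsymm]; exact hxyN⟩
    · show (F g₂).1 < (F g₂).2
      rw [hFdef]
      simp only [he₂g₂, hsymm]
      exact hlt
  · rintro p ⟨g, ⟨⟨⟨hgsrc, hgmem⟩, hgF⟩, hgP⟩, rfl⟩
    set h : S.G := e₁.symm (e₂ g) with hhdef
    have hhN : (h : X × X) ∈ N := hgmem.2
    have hh1 : (h : X × X).1 = e₂ g := by
      have : e₁ h = e₂ g := e₁.right_inv hgmem.1
      rw [← this, ← he₁]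
    have hg1 : e₂ g = (g : X × X).1 := by rw [← he₂]
    have hle : (h : X × X).1 ≤ φ ((h : X × X).2) := (hNeta hhN).2
    have hlt2 : ((h : X × X).2) < (g : X × X).2 := hgF
    refine ⟨hgP, ?_⟩
    calc (g : X × X).1 = (h : X × X).1 := by rw [hh1, hg1]
      _ ≤ φ ((h : X × X).2) := hle
      _ ≤ φ ((g : X × X).2) := hmono _ _ (le_of_lt hlt2)


set_option linter.unusedSectionVars false in
/-- Left absorption. -/
lemma sigma_absorb_left (S : BFSetting X) (φ : X → X) {w x y : X}
    (hwx : (w, x) ∈ S.P) (hxy : (x, y) ∈ S.sigmaClosed φ) :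
    (w, y) ∈ S.sigmaClosed φ := by
  letI := S.tG
  obtain ⟨hxyP, N, hNopen, hxyN, hNeta⟩ := hxy
  rcases eq_or_lt_of_le ((S.P_iff_le (S.P_subset hwx)).1 hwx) with rfl | hlt
  · exact ⟨hxyP, N, hNopen, hxyN, hNeta⟩
  have hxyG : (x, y) ∈ S.G := S.P_subset hxyP
  have hwyG : (w, y) ∈ S.G := S.G_trans (S.P_subset hwx) hxyG
  have hwyP : (w, y) ∈ S.P :=
    (S.P_iff_le hwyG).2 (le_trans (le_of_lt hlt) ((S.P_iff_le hxyG).1 hxyP))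
  set g₁ : S.G := ⟨(x, y), hxyG⟩ with hg₁
  set g₂ : S.G := ⟨(w, y), hwyG⟩ with hg₂
  obtain ⟨e₁, hg₁src, he₁⟩ := S.pi2_localHomeomorph g₁
  obtain ⟨e₂, hg₂src, he₂⟩ := S.pi2_localHomeomorph g₂
  have hval1 : Continuous fun g : S.G => (g : X × X).1 :=
    continuous_fst.comp S.incl_continuous
  have hinner : IsOpen (e₁.target ∩ ⇑e₁.symm ⁻¹' (Subtype.val ⁻¹' N)) :=
    e₁.continuousOn_symm.isOpen_inter_preimage e₁.open_target hNopen.2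
  set s₀ : Set S.G :=
    e₂.source ∩ ⇑e₂ ⁻¹' (e₁.target ∩ ⇑e₁.symm ⁻¹' (Subtype.val ⁻¹' N)) with hs₀def
  have hs₀ : IsOpen s₀ := e₂.continuousOn.isOpen_inter_preimage e₂.open_source hinner
  set F : S.G → X × X :=
    fun g => ((g : X × X).1, ((e₁.symm (e₂ g) : S.G) : X × X).1) with hFdef
  have hF : ContinuousOn F s₀ := by
    refine ContinuousOn.prodMk (hval1.continuousOn) ?_
    refine hval1.comp_continuousOn ?_
    refine e₁.continuousOn_symm.comp (e₂.continuousOn.mono inter_subset_left) ?_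
    exact fun g hg => hg.2.1
  set C : Set S.G :=
    (s₀ ∩ F ⁻¹' {p : X × X | p.1 < p.2}) ∩ (Subtype.val ⁻¹' S.P) with hCdef
  have hC : IsOpen C :=
    (hF.isOpen_inter_preimage hs₀ (isOpen_lt continuous_fst continuous_snd)).inter S.P_open
  have hye₁ : y ∈ e₁.target := by
    have : e₁ g₁ = y := by rw [← he₁]
    exact this ▸ e₁.map_source hg₁src
  have hsymm : e₁.symm y = g₁ := by
    have h1 : e₁ g₁ = y := by rw [← he₁]
    rw [← h1, e₁.left_inv hg₁src]
  have he₂g₂ : e₂ g₂ = y := by rw [← he₂]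
  refine ⟨hwyP, Subtype.val '' C, ⟨?_, ?_⟩, ?_, ?_⟩
  · rintro p ⟨g, _, rfl⟩; exact g.2
  · rw [Set.preimage_image_eq C Subtype.val_injective]; exact hC
  · refine ⟨g₂, ⟨⟨⟨hg₂src, ?_⟩, ?_⟩, hwyP⟩, rfl⟩
    · simp only [Set.mem_preimage, he₂g₂]
      exact ⟨hye₁, by simp only [Set.mem_preimage, hsymm]; exact hxyN⟩
    · show (F g₂).1 < (F g₂).2
      rw [hFdef]
      simp only [he₂g₂, hsymm]
      exact hlt
  · rintro p ⟨g, ⟨⟨⟨hgsrc, hgmem⟩, hgF⟩, hgP⟩, rfl⟩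
    set h : S.G := e₁.symm (e₂ g) with hhdef
    have hhN : (h : X × X) ∈ N := hgmem.2
    have hh2 : (h : X × X).2 = e₂ g := by
      have : e₁ h = e₂ g := e₁.right_inv hgmem.1
      rw [← this, ← he₁]
    have hg2 : e₂ g = (g : X × X).2 := by rw [← he₂]
    have hle : (h : X × X).1 ≤ φ ((h : X × X).2) := (hNeta hhN).2
    have hlt2 : (g : X × X).1 < ((h : X × X).1) := hgF
    refine ⟨hgP, ?_⟩
    calc (g : X × X).1 ≤ (h : X × X).1 := le_of_lt hlt2
      _ ≤ φ ((h : X × X).2) := hle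
      _ = φ ((g : X × X).2) := by rw [hh2, hg2]

end BFSetting

/-- Proposition 3: `σ[φ]` is an ideal set. -/
theorem stmt_2 (S : BFSetting X) (φ : X → X) (hφ : S.BoundaryFunction φ) :
    S.IdealSet (S.sigmaClosed φ) := by
  letI := S.tG
  have hmono : ∀ a b : X, a ≤ b → φ a ≤ φ b := fun a b h =>
    h.lt_or_eq.elim (fun h' => hφ.2.2.1 a b h') (fun h' => h' ▸ le_rfl)
  refine ⟨fun p hp => hp.1, ?_, ?_⟩
  · refine isOpen_iff_forall_mem_open.2 ?_
    intro g hg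
    obtain ⟨hP, N, hNo, hgN, hNeta⟩ := hg
    exact ⟨Subtype.val ⁻¹' N, fun g' hg' => ⟨(hNeta hg').1, N, hNo, hg', hNeta⟩,
      hNo.2, hgN⟩
  · intro w x y z hwx hxy hyz
    exact S.sigma_absorb_right φ hmono (S.sigma_absorb_left φ hwx hxy) hyz
end

section
/- Let φ : X → X be a boundary function and let σ be any ideal set with σ(φ) ⊆ σ ⊆ σ[φ]. Then the boundary function ψ = φ_σ of σ satisfies φ⁻(y) ⪯ ψ(y) ⪯ φ(y) for every y ∈ X. -/
open Set Topology

variable {X : Type*} [LinearOrder X] [TopologicalSpace X] [OrderTopology X]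
  [CompactSpace X] [T2Space X] [Nonempty X]

open BFSetting


lemma predOf_covBy {X : Type*} [Preorder X] {x : X} (h : ∃ p, p ⋖ x) :
    predOf x ⋖ x := by
  rw [predOf, dif_pos h]; exact h.choose_spec

lemma predOf_eq_self {X : Type*} [Preorder X] {x : X} (h : ¬ ∃ p, p ⋖ x) :
    predOf x = x := by
  rw [predOf, dif_neg h]

/-- Proposition 4: if `σ(φ) ⊆ σ ⊆ σ[φ]` then the boundary function `ψ` of the
ideal set `σ` satisfies `φ⁻ ⪯ ψ ⪯ φ` pointwise. -/
theorem stmt_4 (S : BFSetting X) (φ : X → X) (hφ : S.BoundaryFunction φ)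
    (σ : Set (X × X)) (hσ : S.IdealSet σ)
    (h₁ : S.sigmaOpen φ ⊆ σ) (h₂ : σ ⊆ S.sigmaClosed φ)
    (ψ : X → X) (hψ : S.IsBdryFnOf σ ψ) :
    ∀ y : X, bMinus φ y ≤ ψ y ∧ ψ y ≤ φ y := by
  intro y
  have hlub := hψ y
  have hub : ψ y ≤ φ y := by
    apply hlub.2
    intro x hx
    obtain ⟨hxG, hxσ⟩ := hx
    obtain ⟨hP, N, hNopen, hpN, hNsub⟩ := h₂ hxσ
    exact (hNsub hpN).2
  refine ⟨?_, hub⟩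
  by_contra hc
  push_neg at hc
  have hex : ∃ x, ψ y < x ∧ x < φ y := by
    by_cases hg : HasGapBelow (φ y)
    · have hcov := predOf_covBy hg
      exact ⟨predOf (φ y), hc, hcov.lt⟩
    · rw [bMinus, predOf_eq_self hg] at hc
      have hncv : ¬ (ψ y ⋖ φ y) := fun hcv => hg ⟨ψ y, hcv⟩
      obtain ⟨z, hz1, hz2⟩ := (not_covBy_iff hc).mp hncv
      exact ⟨z, hz1, hz2⟩
  obtain ⟨x, hx1, hx2⟩ := hex
  obtain ⟨z, hzorb, hzI⟩ := (S.orbit_dense y).exists_mem_open isOpen_Ioo ⟨x, hx1, hx2⟩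
  have hzG : (z, y) ∈ S.G := hzorb
  have hzlt : z < φ y := hzI.2
  have hzley : z ≤ y := le_of_lt (lt_of_lt_of_le hzlt (hφ.1 y))
  have hzP : (z, y) ∈ S.P := (S.P_iff_le hzG).mpr hzley
  have hzσ : (z, y) ∈ σ := h₁ ⟨hzP, hzlt⟩
  have : z ≤ ψ y := hlub.1 ⟨hzG, hzσ⟩
  exact absurd this (not_le.mpr hzI.1)
end

section
/- If σ is an ideal set and φ = φ_σ is its boundary function, then σ(φ) ⊆ σ ⊆ σ[φ]. -/
open Set Topology

variable {X : Type*} [LinearOrder X] [TopologicalSpace X] [OrderTopology X]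
  [CompactSpace X] [T2Space X] [Nonempty X]

open BFSetting

/-- Proposition 5: if `φ` is the boundary function of the ideal set `σ` then
`σ(φ) ⊆ σ ⊆ σ[φ]`. -/
theorem stmt_5 (S : BFSetting X) (σ : Set (X × X)) (hσ : S.IdealSet σ)
    (φ : X → X) (hφ : S.IsBdryFnOf σ φ) :
    S.sigmaOpen φ ⊆ σ ∧ σ ⊆ S.sigmaClosed φ := by
  obtain ⟨hσP, hσOpen, hσIdeal⟩ := hσ
  constructor
  · rintro ⟨x, y⟩ ⟨hP, hlt⟩
    have hlub := hφ y
    have hnub : x ∉ upperBounds {x : X | (x, y) ∈ S.G ∧ (x, y) ∈ σ} := by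
      intro h
      exact absurd (hlub.2 h) (not_le.mpr hlt)
    simp only [upperBounds, Set.mem_setOf_eq, not_forall, not_le] at hnub
    obtain ⟨a, ⟨haG, haσ⟩, hxa⟩ := hnub
    have hxaG : (x, a) ∈ S.G := S.G_trans (S.P_subset hP) (S.G_symm haG)
    have hxaP : (x, a) ∈ S.P := (S.P_iff_le hxaG).mpr hxa.le
    have hyyP : (y, y) ∈ S.P := (S.P_iff_le (S.G_refl y)).mpr le_rfl
    exact hσIdeal x a y y hxaP haσ hyyP
  · intro p hp
    refine ⟨hσP hp, σ, ⟨fun q hq => S.P_subset (hσP hq), hσOpen⟩, hp, ?_⟩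
    rintro ⟨s, t⟩ hst
    exact ⟨hσP hst, (hφ t).1 ⟨S.P_subset (hσP hst), hst⟩⟩
end

section
/- If φ : X → X is a boundary function, then the boundary function of the ideal set σ[φ] is φ itself; that is, φ_{σ[φ]} = φ. -/
open Set Topology

variable {X : Type*} [LinearOrder X] [TopologicalSpace X] [OrderTopology X]
  [CompactSpace X] [T2Space X] [Nonempty X]

open BFSetting

/-- Proposition 6 (first half): the boundary function of the ideal set `σ[φ]`
is `φ` itself. -/
theorem stmt_6 (S : BFSetting X) (φ : X → X) (hφ : S.BoundaryFunction φ) :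
    S.IsBdryFnOf (S.sigmaClosed φ) φ := by
  obtain ⟨h1, h2, h3, h4⟩ := hφ
  intro y
  constructor
  · rintro x ⟨hxG, hxP, N, hN, hxN, hNη⟩
    exact (hNη hxN).2
  · intro b hb
    by_contra hlt
    push_neg at hlt
    -- hlt : b < φ y
    by_cases hgap : HasGapBelow (φ y)
    · obtain ⟨hPy, -, -, N, hGSet, hmem, hle⟩ := h2 y hgap
      have hin : φ y ∈ {x : X | (x, y) ∈ S.G ∧ (x, y) ∈ S.sigmaClosed φ} := by
        refine ⟨S.P_subset hPy, hPy, N ∩ S.P, ⟨?_, ?_⟩, ⟨hmem, hPy⟩, ?_⟩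
        · exact fun p hp => hGSet.1.1 hp.1
        · rw [Set.preimage_inter]
          exact @IsOpen.inter _ S.tG _ _ hGSet.1.2 S.P_open
        · rintro ⟨s, t⟩ ⟨hst, hstP⟩
          exact ⟨hstP, hle s t hst⟩
      exact absurd (hb hin) (not_le.mpr hlt)
    · -- φ y has no gap below
      have hnoc : ¬ b ⋖ φ y := fun h => hgap ⟨b, h⟩
      obtain ⟨c, hbc, hcy⟩ := (not_covBy_iff hlt).mp hnoc
      obtain ⟨x, hxG, hxI⟩ := (S.orbit_dense y).exists_mem_open isOpen_Ioo ⟨c, hbc, hcy⟩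
      obtain ⟨hbx, hxφ⟩ := hxI
      -- find t₀ < y and m > x with m ≤ φ t for all t > t₀
      have key : ∃ t₀ m, t₀ < y ∧ x < m ∧ ∀ t, t₀ < t → m ≤ φ t := by
        by_cases hy : HasGapBelow y
        · obtain ⟨p, hp⟩ := hy
          refine ⟨p, φ y, hp.1, hxφ, fun t ht => ?_⟩
          have hyt : y ≤ t := le_of_not_gt (hp.2 ht)
          rcases eq_or_lt_of_le hyt with h | h
          · exact le_of_eq (congrArg φ h)
          · exact h3 y t h
        · have hlub := h4 y hy
          have hex : ∃ t₀, t₀ < y ∧ x < φ t₀ := by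
            by_contra h
            push_neg at h
            refine absurd (hlub.2 ?_) (not_le.mpr hxφ)
            rintro v ⟨t, ht, rfl⟩
            exact h t ht
          obtain ⟨t₀, ht₀, hv⟩ := hex
          refine ⟨t₀, φ t₀, ht₀, hv, fun t ht => ?_⟩
          rcases eq_or_lt_of_le ht.le with h | h
          · exact le_of_eq (congrArg φ h)
          · exact h3 t₀ t h
      obtain ⟨t₀, m, ht₀y, hxm, hkey⟩ := key
      have hxy : x ≤ y := le_of_lt (lt_of_lt_of_le hxφ (h1 y))
      have hxP : (x, y) ∈ S.P := (S.P_iff_le hxG).mpr hxy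
      have hin : x ∈ {x : X | (x, y) ∈ S.G ∧ (x, y) ∈ S.sigmaClosed φ} := by
        refine ⟨hxG, hxP, S.P ∩ (Set.Iio m ×ˢ Set.Ioi t₀), ⟨?_, ?_⟩,
          ⟨hxP, hxm, ht₀y⟩, ?_⟩
        · exact fun p hp => S.P_subset hp.1
        · rw [Set.preimage_inter]
          have hpre : @IsOpen S.G S.tG (Subtype.val ⁻¹' (Set.Iio m ×ˢ Set.Ioi t₀)) :=
            @Continuous.isOpen_preimage _ _ S.tG _ _ S.incl_continuous _ (isOpen_Iio.prod isOpen_Ioi)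
          exact @IsOpen.inter _ S.tG _ _ S.P_open hpre
        · rintro ⟨s, t⟩ ⟨hstP, hsm, ht⟩
          exact ⟨hstP, le_of_lt (lt_of_lt_of_le hsm (hkey t ht))⟩
      exact absurd (hb hin) (not_le.mpr hbx)
end

section
/- If φ : X → X is a boundary function, then the boundary function of the ideal set σ(φ) is φ⁻; that is, φ_{σ(φ)} = φ⁻. -/
open Set Topology

variable {X : Type*} [LinearOrder X] [TopologicalSpace X] [OrderTopology X]
  [CompactSpace X] [T2Space X] [Nonempty X]

open BFSetting

/-- Proposition 6 (second half): the boundary function of the ideal set `σ(φ)`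
is `φ⁻`. -/
theorem stmt_7 (S : BFSetting X) (φ : X → X) (hφ : S.BoundaryFunction φ) :
    S.IsBdryFnOf (S.sigmaOpen φ) (bMinus φ) := by
  intro y
  have hφy : φ y ≤ y := hφ.1 y
  have hmem : ∀ x : X, (x, y) ∈ S.G → x < φ y →
      x ∈ {x : X | (x, y) ∈ S.G ∧ (x, y) ∈ S.sigmaOpen φ} := by
    intro x hG hlt
    exact ⟨hG, (S.P_iff_le hG).2 (le_of_lt (lt_of_lt_of_le hlt hφy)), hlt⟩
  unfold bMinus predOf
  by_cases h : ∃ p, p ⋖ φ y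
  · rw [dif_pos h]
    obtain hp := h.choose_spec
    constructor
    · rintro x ⟨hG, hP, hlt⟩
      by_contra hx
      exact hp.2 (lt_of_not_ge hx) hlt
    · intro b hb
      by_contra hnb
      have hbp : b < h.choose := lt_of_not_ge hnb
      obtain ⟨x, hxG, hxI⟩ := (S.orbit_dense y).exists_mem_open isOpen_Ioo
        ⟨h.choose, hbp, hp.1⟩
      exact absurd (hb (hmem x hxG hxI.2)) (not_le_of_gt hxI.1)
  · rw [dif_neg h]
    constructor
    · rintro x ⟨hG, hP, hlt⟩
      exact le_of_lt hlt
    · intro b hb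
      by_contra hnb
      have hbp : b < φ y := lt_of_not_ge hnb
      rcases Set.eq_empty_or_nonempty (Set.Ioo b (φ y)) with he | hne
      · exact h ⟨b, hbp, fun c h1 h2 => (Set.eq_empty_iff_forall_notMem.1 he) c ⟨h1, h2⟩⟩
      · obtain ⟨x, hxG, hxI⟩ := (S.orbit_dense y).exists_mem_open isOpen_Ioo hne
        exact absurd (hb (hmem x hxG hxI.2)) (not_le_of_gt hxI.1)
end

section
/- Let φ : X → X be a boundary function. An ideal set σ has φ as its boundary function (i.e. φ_σ = φ) if, and only if, σ(φ) ∪ L_φ ⊆ σ ⊆ σ[φ]. -/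
open Set Topology

variable {X : Type*} [LinearOrder X] [TopologicalSpace X] [OrderTopology X]
  [CompactSpace X] [T2Space X] [Nonempty X]

open BFSetting

/-- Proposition 7: an ideal set `σ` has `φ` as its boundary function iff
`σ(φ) ∪ L_φ ⊆ σ ⊆ σ[φ]`. -/
theorem stmt_8 (S : BFSetting X) (φ : X → X) (hφ : S.BoundaryFunction φ)
    (σ : Set (X × X)) (hσ : S.IdealSet σ) :
    S.IsBdryFnOf σ φ ↔ (S.sigmaOpen φ ∪ S.Lset φ ⊆ σ ∧ σ ⊆ S.sigmaClosed φ) := by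
  obtain ⟨hσP, hσopen, hσabs⟩ := hσ
  have hσG : σ ⊆ S.G := fun p hp => S.P_subset (hσP hp)
  -- σ ⊆ η(φ) whenever φ is the boundary function of σ will be derived inline.
  constructor
  · intro h
    constructor
    · rintro ⟨x, y⟩ hxy
      rcases hxy with ⟨hP, hlt⟩ | ⟨⟨y', hpe, hgap⟩, _⟩
      · -- σ(φ) ⊆ σ
        have hnub : x ∉ upperBounds {x : X | (x, y) ∈ S.G ∧ (x, y) ∈ σ} := by
          intro hub
          exact absurd ((h y).2 hub) (not_le.mpr hlt)
        simp only [upperBounds, Set.mem_setOf_eq, not_forall, not_le, exists_prop] at hnub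
        obtain ⟨x', ⟨hx'G, hx'σ⟩, hx'gt⟩ := hnub
        have hxx'G : (x, x') ∈ S.G := S.G_trans (S.P_subset hP) (S.G_symm hx'G)
        have hxx'P : (x, x') ∈ S.P := (S.P_iff_le hxx'G).mpr (le_of_lt hx'gt)
        have hyyP : (y, y) ∈ S.P := (S.P_iff_le (S.G_refl y)).mpr le_rfl
        exact hσabs x x' y y hxx'P hx'σ hyyP
      · -- L_φ ⊆ σ
        obtain ⟨q, hq⟩ := hgap
        have hnub : q ∉ upperBounds {x : X | (x, y') ∈ S.G ∧ (x, y') ∈ σ} := by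
          intro hub
          exact absurd ((h y').2 hub) (not_le.mpr hq.1)
        simp only [upperBounds, Set.mem_setOf_eq, not_forall, not_le, exists_prop] at hnub
        obtain ⟨x', ⟨hx'G, hx'σ⟩, hx'gt⟩ := hnub
        have hle : x' ≤ φ y' := (h y').1 ⟨hx'G, hx'σ⟩
        have hxeq : x' = φ y' := by
          rcases lt_or_eq_of_le hle with hlt' | he
          · exact absurd hlt' (hq.2 hx'gt)
          · exact he
        rw [hpe]
        rwa [hxeq] at hx'σ
    · -- σ ⊆ σ[φ]
      intro p hp
      refine ⟨hσP hp, σ, ⟨hσG, hσopen⟩, hp, ?_⟩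
      rintro ⟨s, t⟩ hst
      exact ⟨hσP hst, (h t).1 ⟨hσG hst, hst⟩⟩
  · rintro ⟨hsub, hsup⟩ y
    constructor
    · rintro x ⟨hxG, hxσ⟩
      obtain ⟨hP, N, hN, hmem, hNη⟩ := hsup hxσ
      exact (hNη hmem).2
    · intro b hb
      by_contra hc
      push_neg at hc
      by_cases hio : (Set.Ioo b (φ y)).Nonempty
      · obtain ⟨x, hxorb, hxio⟩ := (S.orbit_dense y).exists_mem_open isOpen_Ioo hio
        have hxG : (x, y) ∈ S.G := hxorb
        have hxley : x ≤ y := le_of_lt (lt_of_lt_of_le hxio.2 (hφ.1 y))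
        have hxP : (x, y) ∈ S.P := (S.P_iff_le hxG).mpr hxley
        have hxσ : (x, y) ∈ σ := hsub (Or.inl ⟨hxP, hxio.2⟩)
        exact absurd (hb ⟨hxG, hxσ⟩) (not_le.mpr hxio.1)
      · have hcov : b ⋖ φ y := ⟨hc, fun c hc1 hc2 => hio ⟨c, hc1, hc2⟩⟩
        have hgap : HasGapBelow (φ y) := ⟨b, hcov⟩
        obtain ⟨hPy, -, -, N, hGSet, hmemN, hNle⟩ := hφ.2.1 y hgap
        have hNη : N ⊆ S.eta φ := by
          rintro ⟨s, t⟩ hst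
          have h1 : s ≤ φ t := hNle s t hst
          have h2 : (s, t) ∈ S.G := hGSet.1.1 hst
          exact ⟨(S.P_iff_le h2).mpr (le_trans h1 (hφ.1 t)), h1⟩
        have hL : (φ y, y) ∈ S.Lset φ :=
          ⟨⟨y, rfl, hgap⟩, hPy, N, hGSet.1, hmemN, hNη⟩
        have hσL : (φ y, y) ∈ σ := hsub (Or.inr hL)
        exact absurd (hb ⟨S.P_subset hPy, hσL⟩) (not_le.mpr hc)
end

section
/- If φ and ψ are boundary functions, then so are their pointwise join φ ∨ ψ (given by (φ ∨ ψ)(y) = max(φ(y), ψ(y))) and pointwise meet φ ∧ ψ (given by (φ ∧ ψ)(y) = min(φ(y), ψ(y))). -/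
open Set Topology

variable {X : Type*} [LinearOrder X] [TopologicalSpace X] [OrderTopology X]
  [CompactSpace X] [T2Space X] [Nonempty X]

open BFSetting


section Aux

variable {X : Type*} [LinearOrder X] [TopologicalSpace X]

lemma gset_inter_prod (S : BFSetting X) {N : Set (X × X)} (hN : S.GSet N)
    {U V : Set X} (hU : IsOpen U) (hV : IsOpen V) : S.GSet (N ∩ U ×ˢ V) := by
  obtain ⟨⟨hsub, hopen⟩, h1, h2⟩ := hN
  refine ⟨⟨fun p hp => hsub hp.1, ?_⟩, h1.mono inter_subset_left,
    h2.mono inter_subset_left⟩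
  rw [Set.preimage_inter]
  exact @IsOpen.inter _ S.tG _ _ hopen
    (@Continuous.isOpen_preimage _ _ S.tG _ _ S.incl_continuous _ (hU.prod hV))

lemma gset_inter (S : BFSetting X) {N M : Set (X × X)} (hN : S.GSet N)
    (hM : S.GSet M) : S.GSet (N ∩ M) := by
  obtain ⟨⟨hsub, hopen⟩, h1, h2⟩ := hN
  refine ⟨⟨fun p hp => hsub hp.1, ?_⟩, h1.mono inter_subset_left,
    h2.mono inter_subset_left⟩
  rw [Set.preimage_inter]
  exact @IsOpen.inter _ S.tG _ _ hopen hM.1.2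

lemma bf_mono (S : BFSetting X) {φ : X → X} (hφ : S.BoundaryFunction φ)
    {y z : X} (h : y ≤ z) : φ y ≤ φ z :=
  h.lt_or_eq.elim (fun h' => hφ.2.2.1 y z h') (fun h' => h' ▸ le_rfl)

lemma isOpen_Ici_of_gap [OrderTopology X] {y : X} (h : HasGapBelow y) :
    IsOpen (Set.Ici y) := by
  obtain ⟨p, hp⟩ := h
  rw [← hp.Ioi_eq]
  exact isOpen_Ioi

end Aux

/-- Lemma 11: pointwise max and min of boundary functions are boundary functions. -/
theorem stmt_13 (S : BFSetting X) (φ ψ : X → X)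
    (hφ : S.BoundaryFunction φ) (hψ : S.BoundaryFunction ψ) :
    S.BoundaryFunction (fun y => max (φ y) (ψ y)) ∧
    S.BoundaryFunction (fun y => min (φ y) (ψ y)) := by
  obtain ⟨hφ1, hφ2, hφ3, hφ4⟩ := hφ
  obtain ⟨hψ1, hψ2, hψ3, hψ4⟩ := hψ
  have hφm : ∀ {y z : X}, y ≤ z → φ y ≤ φ z :=
    fun h => bf_mono S ⟨hφ1, hφ2, hφ3, hφ4⟩ h
  have hψm : ∀ {y z : X}, y ≤ z → ψ y ≤ ψ z :=
    fun h => bf_mono S ⟨hψ1, hψ2, hψ3, hψ4⟩ h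
  constructor
  · -- max
    refine ⟨fun y => max_le (hφ1 y) (hψ1 y), ?_, fun y z h => max_le_max (hφ3 y z h) (hψ3 y z h), ?_⟩
    · intro y hgap
      rcases le_total (ψ y) (φ y) with hle | hle
      · simp only [max_eq_left hle] at hgap ⊢
        obtain ⟨hP, hgy, hstrict, N, hGS, hmem, hbd⟩ := hφ2 y hgap
        refine ⟨hP, hgy, fun z hz => lt_of_lt_of_le (hstrict z hz) (le_max_left _ _), N, hGS, hmem,
          fun s t hst => le_trans (hbd s t hst) (le_max_left _ _)⟩
      · simp only [max_eq_right hle] at hgap ⊢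
        obtain ⟨hP, hgy, hstrict, N, hGS, hmem, hbd⟩ := hψ2 y hgap
        refine ⟨hP, hgy, fun z hz => lt_of_lt_of_le (hstrict z hz) (le_max_right _ _), N, hGS, hmem,
          fun s t hst => le_trans (hbd s t hst) (le_max_right _ _)⟩
    · intro y hgap
      constructor
      · rintro _ ⟨t, ht, rfl⟩
        exact max_le_max (hφm ht.le) (hψm ht.le)
      · intro b hb
        refine max_le ((hφ4 y hgap).2 ?_) ((hψ4 y hgap).2 ?_)
        · rintro _ ⟨t, ht, rfl⟩
          exact le_trans (le_max_left _ _) (hb ⟨t, ht, rfl⟩)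
        · rintro _ ⟨t, ht, rfl⟩
          exact le_trans (le_max_right _ _) (hb ⟨t, ht, rfl⟩)
  · -- min
    refine ⟨fun y => le_trans (min_le_left _ _) (hφ1 y), ?_,
      fun y z h => min_le_min (hφ3 y z h) (hψ3 y z h), ?_⟩
    · intro y hgap
      rcases lt_trichotomy (φ y) (ψ y) with h | h | h
      · simp only [min_eq_left h.le] at hgap ⊢
        obtain ⟨hP, hgy, hstrict, N, hGS, hmem, hbd⟩ := hφ2 y hgap
        refine ⟨hP, hgy, fun z hz => lt_min (hstrict z hz) (lt_of_lt_of_le h (hψm hz.le)),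
          N ∩ (Set.Iio (ψ y)) ×ˢ (Set.Ici y),
          gset_inter_prod S hGS isOpen_Iio (isOpen_Ici_of_gap hgy),
          ⟨hmem, h, le_refl y⟩, ?_⟩
        rintro s t ⟨hst, hs, ht⟩
        exact le_min (hbd s t hst) (le_of_lt (lt_of_lt_of_le hs (hψm ht)))
      · -- φ y = ψ y
        have hgap' : HasGapBelow (min (φ y) (ψ y)) := hgap
        have hgφ : HasGapBelow (φ y) := by rwa [min_eq_left h.le] at hgap'
        have hgψ : HasGapBelow (ψ y) := h ▸ hgφ
        obtain ⟨hPφ, hgy, hstφ, Nφ, hGSφ, hmemφ, hbdφ⟩ := hφ2 y hgφ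
        obtain ⟨hPψ, _, hstψ, Nψ, hGSψ, hmemψ, hbdψ⟩ := hψ2 y hgψ
        simp only [min_eq_left h.le]
        refine ⟨hPφ, hgy, fun z hz => lt_min (hstφ z hz) (h ▸ hstψ z hz),
          Nφ ∩ Nψ, gset_inter S hGSφ hGSψ, ⟨hmemφ, h ▸ hmemψ⟩, ?_⟩
        rintro s t ⟨h1, h2⟩
        exact le_min (hbdφ s t h1) (hbdψ s t h2)
      · simp only [min_eq_right h.le] at hgap ⊢
        obtain ⟨hP, hgy, hstrict, N, hGS, hmem, hbd⟩ := hψ2 y hgap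
        refine ⟨hP, hgy, fun z hz => lt_min (lt_of_lt_of_le h (hφm hz.le)) (hstrict z hz),
          N ∩ (Set.Iio (φ y)) ×ˢ (Set.Ici y),
          gset_inter_prod S hGS isOpen_Iio (isOpen_Ici_of_gap hgy),
          ⟨hmem, h, le_refl y⟩, ?_⟩
        rintro s t ⟨hst, hs, ht⟩
        exact le_min (le_of_lt (lt_of_lt_of_le hs (hφm ht))) (hbd s t hst)
    · intro y hgap
      constructor
      · rintro _ ⟨t, ht, rfl⟩
        exact min_le_min (hφm ht.le) (hψm ht.le)
      · intro b hb
        by_contra hc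
        rw [not_le, lt_min_iff] at hc
        obtain ⟨hbφ, hbψ⟩ := hc
        have h1 : ¬ b ∈ upperBounds (φ '' {t | t < y}) :=
          fun h => absurd ((hφ4 y hgap).2 h) (not_le.2 hbφ)
        have h2 : ¬ b ∈ upperBounds (ψ '' {t | t < y}) :=
          fun h => absurd ((hψ4 y hgap).2 h) (not_le.2 hbψ)
        simp only [mem_upperBounds] at h1 h2
        push_neg at h1 h2
        obtain ⟨_, ⟨t1, ht1, rfl⟩, hx1⟩ := h1
        obtain ⟨_, ⟨t2, ht2, rfl⟩, hx2⟩ := h2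
        have hty : max t1 t2 < y := max_lt ht1 ht2
        have hmin : b < min (φ (max t1 t2)) (ψ (max t1 t2)) :=
          lt_min (lt_of_lt_of_le hx1 (hφm (le_max_left _ _)))
            (lt_of_lt_of_le hx2 (hψm (le_max_right _ _)))
        exact absurd (hb ⟨max t1 t2, hty, rfl⟩) (not_le.2 hmin)
end

section
/- Let σ and τ be ideal sets with boundary functions φ_σ and φ_τ. Then σ ∩ τ and σ ∪ τ are ideal sets, and their boundary functions satisfy φ_{σ∩τ}(y) = min(φ_σ(y), φ_τ(y)) and φ_{σ∪τ}(y) = max(φ_σ(y), φ_τ(y)) for all y ∈ X. -/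
open Set Topology

variable {X : Type*} [LinearOrder X] [TopologicalSpace X] [OrderTopology X]
  [CompactSpace X] [T2Space X] [Nonempty X]

open BFSetting

/-- Lemma 12: `σ ∩ τ` and `σ ∪ τ` are ideal sets with boundary functions
`φ_σ ∧ φ_τ` and `φ_σ ∨ φ_τ` respectively. -/
theorem stmt_14 (S : BFSetting X) (σ τ : Set (X × X))
    (hσ : S.IdealSet σ) (hτ : S.IdealSet τ)
    (φσ φτ : X → X) (hφσ : S.IsBdryFnOf σ φσ) (hφτ : S.IsBdryFnOf τ φτ) :
    S.IdealSet (σ ∩ τ) ∧ S.IdealSet (σ ∪ τ) ∧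
    S.IsBdryFnOf (σ ∩ τ) (fun y => min (φσ y) (φτ y)) ∧
    S.IsBdryFnOf (σ ∪ τ) (fun y => max (φσ y) (φτ y)) := by
  obtain ⟨hσP, hσo, hσabs⟩ := hσ
  obtain ⟨hτP, hτo, hτabs⟩ := hτ
  have hPyy : ∀ y : X, (y, y) ∈ S.P := fun y => (S.P_iff_le (S.G_refl y)).2 le_rfl
  refine ⟨⟨fun p hp => hσP hp.1, (by letI := S.tG; exact hσo.inter hτo),
      fun w x y z hwx hxy hyz => ⟨hσabs w x y z hwx hxy.1 hyz, hτabs w x y z hwx hxy.2 hyz⟩⟩,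
    ⟨fun p hp => hp.elim (fun h => hσP h) (fun h => hτP h),
      (by letI := S.tG; exact hσo.union hτo),
      fun w x y z hwx hxy hyz => hxy.elim (fun h => Or.inl (hσabs w x y z hwx h hyz))
        (fun h => Or.inr (hτabs w x y z hwx h hyz))⟩, ?_, ?_⟩
  · intro y
    constructor
    · intro x hx
      exact le_min ((hφσ y).1 ⟨hx.1, hx.2.1⟩) ((hφτ y).1 ⟨hx.1, hx.2.2⟩)
    · intro b hb
      by_contra hlt
      push_neg at hlt
      have hbσ : b < φσ y := hlt.trans_le (min_le_left _ _)
      have hnub : ¬ b ∈ upperBounds {x : X | (x, y) ∈ S.G ∧ (x, y) ∈ σ} :=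
        fun hub => absurd ((hφσ y).2 hub) (not_le.2 hbσ)
      obtain ⟨x, hxG, hxσ, hbx⟩ : ∃ x, (x, y) ∈ S.G ∧ (x, y) ∈ σ ∧ b < x := by
        simpa [upperBounds, not_le] using hnub
      have hx : (x, y) ∈ S.G ∧ (x, y) ∈ σ := ⟨hxG, hxσ⟩
      by_cases hxτ : (x, y) ∈ τ
      · exact absurd (hb ⟨hx.1, hx.2, hxτ⟩) (not_le.2 hbx)
      · have hub : b ∈ upperBounds {a : X | (a, y) ∈ S.G ∧ (a, y) ∈ τ} := by
          intro a ha
          have hax : a < x := by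
            by_contra hge
            push_neg at hge
            have hGxa : (x, a) ∈ S.G := S.G_trans hx.1 (S.G_symm ha.1)
            exact hxτ (hτabs x a y y ((S.P_iff_le hGxa).2 hge) ha.2 (hPyy y))
          have hGax : (a, x) ∈ S.G := S.G_trans ha.1 (S.G_symm hx.1)
          have haσ : (a, y) ∈ σ :=
            hσabs a x y y ((S.P_iff_le hGax).2 hax.le) hx.2 (hPyy y)
          exact hb ⟨ha.1, haσ, ha.2⟩
        have : φτ y ≤ b := (hφτ y).2 hub
        exact absurd (hlt.trans_le (min_le_right _ _)) (not_lt.2 this)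
  · intro y
    have hset : {x : X | (x, y) ∈ S.G ∧ (x, y) ∈ σ ∪ τ} =
        {x : X | (x, y) ∈ S.G ∧ (x, y) ∈ σ} ∪ {x : X | (x, y) ∈ S.G ∧ (x, y) ∈ τ} := by
      ext x
      simp only [Set.mem_setOf_eq, Set.mem_union]
      tauto
    have := (hφσ y).union (hφτ y)
    rw [hset]
    simpa using this
end

section
/- Let (a,b) ∈ P with a ≠ b and suppose a has no gap below. Define σ_{a,b} = {(x,y) ∈ P : x ≺ a or b ≺ y} and τ_{a,b} = σ_{a,b} ∪ {(a,b)}, and assume τ_{a,b} is an open subset of P. Then σ_{a,b} and τ_{a,b} are both ideal sets, and they have the same boundary function, namely the map ψ : X → X given by ψ(y) = y if y ⪯ a, ψ(y) = a if a ≺ y ⪯ b, and ψ(y) = y if b ≺ y; that is, φ_{σ_{a,b}} = ψ = φ_{τ_{a,b}}. -/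
open Set Topology

variable {X : Type*} [LinearOrder X] [TopologicalSpace X] [OrderTopology X]
  [CompactSpace X] [T2Space X] [Nonempty X]

open BFSetting

/-- The example preceding Proposition 2: `σ_{a,b}` and `τ_{a,b}` are ideal
sets sharing the same boundary function `ψ`. -/
theorem stmt_17 (S : BFSetting X) (a b : X) (hne : a ≠ b)
    (hab : (a, b) ∈ S.P) (hnogap : ¬ HasGapBelow a)
    (hopen : @IsOpen S.G S.tG
      (Subtype.val ⁻¹' ({p ∈ S.P | p.1 < a ∨ b < p.2} ∪ {(a, b)}))) :
    S.IdealSet {p ∈ S.P | p.1 < a ∨ b < p.2} ∧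
    S.IdealSet ({p ∈ S.P | p.1 < a ∨ b < p.2} ∪ {(a, b)}) ∧
    S.IsBdryFnOf {p ∈ S.P | p.1 < a ∨ b < p.2}
      (fun y => if a < y ∧ y ≤ b then a else y) ∧
    S.IsBdryFnOf ({p ∈ S.P | p.1 < a ∨ b < p.2} ∪ {(a, b)})
      (fun y => if a < y ∧ y ≤ b then a else y) := by
  letI := S.tG
  have haG : (a, b) ∈ S.G := S.P_subset hab
  have hablt : a < b := lt_of_le_of_ne ((S.P_iff_le haG).1 hab) hne
  -- key density fact
  have key : ∀ y u : X, u < a → ∃ x, (x, y) ∈ S.G ∧ u < x ∧ x < a := by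
    intro y u hu
    obtain ⟨c, hc1, hc2⟩ : ∃ c, u < c ∧ c < a := by
      by_contra h
      push_neg at h
      exact hnogap ⟨u, hu, fun c hc1 hc2 => absurd (h c hc1) (not_le.2 hc2)⟩
    obtain ⟨x, hxG, hx⟩ := (S.orbit_dense y).exists_mem_open isOpen_Ioo ⟨c, hc1, hc2⟩
    exact ⟨x, hxG, hx.1, hx.2⟩
  set σ : Set (X × X) := {p ∈ S.P | p.1 < a ∨ b < p.2} with hσdef
  have hσsub : σ ⊆ S.P := fun p hp => hp.1
  have hσopen : IsOpen (Subtype.val ⁻¹' σ : Set S.G) := by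
    have heq : (Subtype.val ⁻¹' σ : Set S.G)
        = (Subtype.val ⁻¹' S.P) ∩ (Subtype.val ⁻¹' {p : X × X | p.1 < a ∨ b < p.2}) := by
      ext g
      simp only [hσdef, Set.mem_preimage, Set.mem_inter_iff, Set.mem_sep_iff, Set.mem_setOf_eq]
    rw [heq]
    refine S.P_open.inter ?_
    have hop : IsOpen {p : X × X | p.1 < a ∨ b < p.2} :=
      (isOpen_lt continuous_fst continuous_const).union
        (isOpen_lt continuous_const continuous_snd)
    exact hop.preimage S.incl_continuous
  have hσabs : ∀ w x y z : X, (w, x) ∈ S.P → (x, y) ∈ σ → (y, z) ∈ S.P → (w, z) ∈ σ := by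
    intro w x y z hwx hxy hyz
    refine ⟨S.P_trans (S.P_trans hwx hxy.1) hyz, ?_⟩
    have hwx' : w ≤ x := (S.P_iff_le (S.P_subset hwx)).1 hwx
    have hyz' : y ≤ z := (S.P_iff_le (S.P_subset hyz)).1 hyz
    rcases hxy.2 with h | h
    · exact Or.inl (lt_of_le_of_lt hwx' h)
    · exact Or.inr (lt_of_lt_of_le h hyz')
  have hσideal : S.IdealSet σ := ⟨hσsub, hσopen, hσabs⟩
  have hτsub : σ ∪ {(a, b)} ⊆ S.P := by
    rintro p (hp | hp)
    · exact hp.1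
    · rw [Set.mem_singleton_iff] at hp; rw [hp]; exact hab
  have hτabs : ∀ w x y z : X, (w, x) ∈ S.P → (x, y) ∈ σ ∪ {(a, b)} → (y, z) ∈ S.P →
      (w, z) ∈ σ ∪ {(a, b)} := by
    intro w x y z hwx hxy hyz
    rcases hxy with hxy | hxy
    · exact Or.inl (hσabs w x y z hwx hxy hyz)
    · rw [Set.mem_singleton_iff, Prod.mk.injEq] at hxy
      obtain ⟨rfl, rfl⟩ := hxy
      have hwa : w ≤ x := (S.P_iff_le (S.P_subset hwx)).1 hwx
      have hbz : y ≤ z := (S.P_iff_le (S.P_subset hyz)).1 hyz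
      have hwz : (w, z) ∈ S.P := S.P_trans (S.P_trans hwx hab) hyz
      rcases lt_or_eq_of_le hwa with h | h
      · exact Or.inl ⟨hwz, Or.inl h⟩
      · rcases lt_or_eq_of_le hbz with h' | h'
        · exact Or.inl ⟨hwz, Or.inr h'⟩
        · right; rw [Set.mem_singleton_iff, Prod.mk.injEq]; exact ⟨h, h'.symm⟩
  have hτideal : S.IdealSet (σ ∪ {(a, b)}) := ⟨hτsub, hopen, hτabs⟩
  have hσbdry : S.IsBdryFnOf σ (fun y => if a < y ∧ y ≤ b then a else y) := by
    intro y
    by_cases h : a < y ∧ y ≤ b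
    · simp only [h, if_true]
      constructor
      · rintro x ⟨hxG, hxP, hx⟩
        rcases hx with hx | hx
        · exact le_of_lt hx
        · exact absurd hx (not_lt.2 h.2)
      · intro u hu
        by_contra hua
        push_neg at hua
        obtain ⟨x, hxG, hux, hxa⟩ := key y u hua
        have hxy : x < y := lt_trans hxa h.1
        have hxP : (x, y) ∈ S.P := (S.P_iff_le hxG).2 (le_of_lt hxy)
        exact absurd (hu ⟨hxG, hxP, Or.inl hxa⟩) (not_le.2 hux)
    · simp only [h, if_false]
      have hub : y ∈ upperBounds {x : X | (x, y) ∈ S.G ∧ (x, y) ∈ σ} := by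
        rintro x ⟨hxG, hxP, _⟩
        exact (S.P_iff_le hxG).1 hxP
      refine ⟨hub, ?_⟩
      intro u hu
      by_contra huy
      push_neg at huy
      by_cases hby : b < y
      · have hyy : (y, y) ∈ S.G := S.G_refl y
        have : y ∈ {x : X | (x, y) ∈ S.G ∧ (x, y) ∈ σ} :=
          ⟨hyy, ⟨(S.P_iff_le hyy).2 le_rfl, Or.inr hby⟩⟩
        exact absurd (hu this) (not_le.2 huy)
      · have hya : y ≤ a := by
          by_contra hya
          push_neg at hya
          exact h ⟨hya, le_of_not_gt hby⟩
        rcases lt_or_eq_of_le hya with hya' | hya'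
        · have hyy : (y, y) ∈ S.G := S.G_refl y
          have : y ∈ {x : X | (x, y) ∈ S.G ∧ (x, y) ∈ σ} :=
            ⟨hyy, ⟨(S.P_iff_le hyy).2 le_rfl, Or.inl hya'⟩⟩
          exact absurd (hu this) (not_le.2 huy)
        · subst hya'
          obtain ⟨x, hxG, hux, hxa⟩ := key y u huy
          have hxP : (x, y) ∈ S.P := (S.P_iff_le hxG).2 (le_of_lt hxa)
          exact absurd (hu ⟨hxG, hxP, Or.inl hxa⟩) (not_le.2 hux)
  have hτbdry : S.IsBdryFnOf (σ ∪ {(a, b)}) (fun y => if a < y ∧ y ≤ b then a else y) := by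
    intro y
    obtain ⟨hσub, hσlb⟩ := hσbdry y
    constructor
    · rintro x ⟨hxG, hx⟩
      rcases hx with hx | hx
      · exact hσub ⟨hxG, hx⟩
      · rw [Set.mem_singleton_iff, Prod.mk.injEq] at hx
        obtain ⟨rfl, rfl⟩ := hx
        simp only [hablt, le_rfl, and_self, if_true]
    · intro u hu
      exact hσlb (fun x hx => hu ⟨hx.1, Or.inl hx.2⟩)
  exact ⟨hσideal, hτideal, hσbdry, hτbdry⟩
end
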